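/- arXiv:0802.4095 — 2 statements merged into one kernel-verified Lean document; each statement's English description precedes it below -/
import Mathlib

section
/- Let w be a finite binary word and α > 2 a real number. Then w is α-power-free if and only if μ(w) is α-power-free. -/
/-- Thue–Morse morphism: 0 ↦ 01, 1 ↦ 10 (false = 0, true = 1). -/
def mu : List Bool → List Bool :=
  fun w => w.flatMap (fun b => if b then [true, false] else [false, true])

/-- `w` has period `p`: `w[i] = w[i+p]` whenever both defined. -/
def HasPeriod (w : List Bool) (p : ℕ) : Prop :=
  ∀ i, i + p < w.length → w[i]? = w[i + p]?

/-- `w` is α-power-free: no factor `u` has a period `p` with `|u|/p ≥ α`. -/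
def PowerFree (α : ℝ) (w : List Bool) : Prop :=
  ∀ u p, u <:+: w → 0 < p → HasPeriod u p → (u.length : ℝ) / p < α

/-- `𝓛`: factors of images of `mu`. -/
def InL (w : List Bool) : Prop := ∃ x, w <:+: mu x

/-!
`μ` doubles lengths and periods, so a β-power in `w` yields a β-power in `μ(w)`. Conversely,
let `u` be a factor of `μ(w)` with period `p` and `|u| > 2p`. If `p` is odd, `u` alternates:
a shift by `p` moves every odd position to an even one, where `μ(w)` reads `01` or `10`.
This contradicts the period `p`. If `p = 2q`, the factor of `w` whose image covers `u` has
period `q` and at least half the length of `u`, hence the same exponent.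
-/

@[simp] lemma mu_cons (b : Bool) (w : List Bool) : mu (b :: w) = [b, !b] ++ mu w := by
  cases b <;> rfl

@[simp] lemma mu_append (u v : List Bool) : mu (u ++ v) = mu u ++ mu v := by
  simp [mu, List.flatMap_append]

@[simp] lemma length_mu (w : List Bool) : (mu w).length = 2 * w.length := by
  induction w with
  | nil => rfl
  | cons b w ih => simp [ih]; ring

lemma getElem?_mu_two_mul (w : List Bool) (i : ℕ) : (mu w)[2 * i]? = w[i]? := by
  induction w generalizing i with
  | nil => simp
  | cons b w ih =>
    cases i with
    | zero => simp
    | succ i => simp [Nat.mul_succ, ih]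

lemma getElem?_mu_two_mul_add_one (w : List Bool) (i : ℕ) :
    (mu w)[2 * i + 1]? = w[i]?.map not := by
  induction w generalizing i with
  | nil => simp
  | cons b w ih =>
    cases i with
    | zero => simp
    | succ i => simp [Nat.mul_succ, ih]

lemma mu_infix_mu {u w : List Bool} (h : u <:+: w) : mu u <:+: mu w := by
  obtain ⟨a, b, rfl⟩ := h
  exact ⟨mu a, mu b, by simp⟩

lemma HasPeriod.mu {u : List Bool} {p : ℕ} (h : HasPeriod u p) : HasPeriod (mu u) (2 * p) := by
  intro k hk
  rw [length_mu] at hk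
  obtain ⟨i, rfl | rfl⟩ := Nat.even_or_odd' k
  · rw [← mul_add, getElem?_mu_two_mul, getElem?_mu_two_mul, h i (by omega)]
  · rw [show 2 * i + 1 + 2 * p = 2 * (i + p) + 1 by ring, getElem?_mu_two_mul_add_one,
      getElem?_mu_two_mul_add_one, h i (by omega)]

lemma getElem?_mu_succ_of_even (w : List Bool) {k : ℕ} (hk : Even k) :
    (mu w)[k + 1]? = (mu w)[k]?.map not := by
  obtain ⟨i, rfl⟩ := hk
  rw [← two_mul, getElem?_mu_two_mul_add_one, getElem?_mu_two_mul]

def HasPeriodOn (x : List Bool) (p s e : ℕ) : Prop :=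
  ∀ k, s ≤ k → k + p < e → x[k]? = x[k + p]?

lemma exists_hasPeriodOn_of_infix {u x : List Bool} {p : ℕ} (hux : u <:+: x)
    (hu : HasPeriod u p) : ∃ s, s + u.length ≤ x.length ∧ HasPeriodOn x p s (s + u.length) := by
  obtain ⟨s, hs, hget⟩ := List.infix_iff_getElem?.mp hux
  unfold HasPeriod at hu
  refine ⟨s, by omega, fun k hk hkp => ?_⟩
  have hu' := hu (k - s) (by omega)
  rw [List.getElem?_eq_getElem (by omega), List.getElem?_eq_getElem (by omega)] at hu'
  rw [show k = k - s + s by omega, hget _ (by omega), show k - s + s + p = k - s + p + s by omega,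
    hget _ (by omega), hu']

lemma HasPeriodOn.hasPeriod_take_drop {x : List Bool} {p s e : ℕ} (h : HasPeriodOn x p s e) :
    HasPeriod ((x.drop s).take (e - s)) p := by
  intro i hi
  simp only [List.length_take, List.length_drop] at hi
  simp only [List.getElem?_take, List.getElem?_drop, if_pos (show i < e - s by omega),
    if_pos (show i + p < e - s by omega), ← add_assoc]
  exact h (s + i) (by omega) (by omega)

lemma HasPeriodOn.of_mu {w : List Bool} {q s e : ℕ} (h : HasPeriodOn (mu w) (2 * q) s e)
    (hse : s + 2 * q < e) : HasPeriodOn w q (s / 2) ((e + 1) / 2) := by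
  intro k hk hke
  rcases le_or_gt s (2 * k) with hs | hs
  · have := h (2 * k) hs (by omega)
    rwa [← mul_add, getElem?_mu_two_mul, getElem?_mu_two_mul] at this
  · have := h (2 * k + 1) (by omega) (by omega)
    rw [show 2 * k + 1 + 2 * q = 2 * (k + q) + 1 by ring, getElem?_mu_two_mul_add_one,
      getElem?_mu_two_mul_add_one] at this
    exact Option.map_injective Bool.not_injective this

lemma HasPeriodOn.mu_alternating {w : List Bool} {p s e : ℕ} (h : HasPeriodOn (mu w) p s e)
    (hp : Odd p) (hse : s + 2 * p < e) {k : ℕ} (hsk : s ≤ k) (hke : k + 1 < e) :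
    (mu w)[k + 1]? = (mu w)[k]?.map not := by
  rcases Nat.even_or_odd k with hk | hk
  · exact getElem?_mu_succ_of_even w hk
  -- `k ± p` is even; since `e - s > 2p`, one of the two shifts stays inside the window
  rcases lt_or_ge (k + 1 + p) e with hkp | hkp
  · rw [h k hsk (by omega), h (k + 1) (by omega) hkp, add_right_comm]
    exact getElem?_mu_succ_of_even w (hk.add_odd hp)
  · have back := h (k - p) (by omega) (by omega)
    have back_succ := h (k - p + 1) (by omega) (by omega)
    rw [Nat.sub_add_cancel (by omega)] at back
    rw [show k - p + 1 + p = k + 1 by omega] at back_succ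
    rw [← back, ← back_succ]
    exact getElem?_mu_succ_of_even w (Nat.Odd.sub_odd hk hp)

lemma not_hasPeriodOn_mu_of_odd {w : List Bool} {p s e : ℕ} (hp : Odd p) (hse : s + 2 * p < e)
    (he : e ≤ (mu w).length) : ¬ HasPeriodOn (mu w) p s e := by
  intro h
  have walk : ∀ t ≤ p, (mu w)[s + t]? = (Option.map not)^[t] (mu w)[s]? := by
    intro t
    induction t with
    | zero => simp
    | succ t ih =>
      intro ht
      rw [Function.iterate_succ_apply', ← ih (by omega), ← add_assoc]
      exact h.mu_alternating hp hse (by omega) (by omega)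
  have hinv : Function.Involutive (Option.map not) := fun o => by cases o <;> simp
  have := (h s le_rfl (by omega)).trans (walk p le_rfl)
  rw [hinv.iterate_odd hp, List.getElem?_eq_getElem (by omega)] at this
  simp at this

lemma exists_factor_of_infix_mu_of_hasPeriod {w u : List Bool} {p : ℕ} (hu : u <:+: mu w)
    (hper : HasPeriod u p) (hlen : 2 * p < u.length) :
    ∃ q v, p = 2 * q ∧ v <:+: w ∧ HasPeriod v q ∧ u.length ≤ 2 * v.length := by
  obtain ⟨s, hs, hon⟩ := exists_hasPeriodOn_of_infix hu hper
  rcases Nat.even_or_odd p with ⟨q, rfl⟩ | hodd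
  · rw [← two_mul] at hon hlen ⊢
    refine ⟨q, _, rfl, ((w.drop _).take_prefix _).isInfix.trans (w.drop_suffix _).isInfix,
      (hon.of_mu (by omega)).hasPeriod_take_drop, ?_⟩
    rw [length_mu] at hs
    simp only [List.length_take, List.length_drop]
    omega
  · exact absurd hon (not_hasPeriodOn_mu_of_odd hodd (by omega) hs)

theorem powerFree_iff_mu (w : List Bool) (α : ℝ) (hα : 2 < α) :
    PowerFree α w ↔ PowerFree α (mu w) := by
  constructor
  · intro hw u p hu hp hper
    by_contra! hge
    have h2p : 2 * p < u.length := by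
      have : (2 : ℝ) < u.length / p := hα.trans_le hge
      rw [lt_div_iff₀ (by positivity)] at this
      exact_mod_cast this
    obtain ⟨q, v, rfl, hv, hvper, hlen⟩ := exists_factor_of_infix_mu_of_hasPeriod hu hper h2p
    refine (hw v q hv (by omega) hvper).not_ge ?_
    calc α ≤ u.length / (2 * q : ℕ) := hge
      _ ≤ (2 * v.length : ℕ) / (2 * q : ℕ) := by gcongr
      _ = v.length / q := by push_cast; exact mul_div_mul_left _ _ two_ne_zero
  · intro hmu u p hu hp hper
    have := hmu (mu u) (2 * p) (mu_infix_mu hu) (by omega) hper.mu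
    rwa [length_mu, Nat.cast_mul, Nat.cast_mul, Nat.cast_ofNat,
      mul_div_mul_left _ _ two_ne_zero] at this
end

section
/- Fix a real α > 2 and set r = ⌈α⌉. Suppose 00v ∈ 𝓛 and 00v is α-power-free. If 0^r v = x u y where u is a factor with some period p satisfying |u|/p ≥ α, then x is the empty word and u = 0^r. -/
open List hiding HasPeriod

theorem mu_cons_s6 (a : Bool) (z : List Bool) : mu (a :: z) = [a, !a] ++ mu z := by
  cases a <;> simp [mu]

theorem mu_getElem?_two_mul (z : List Bool) (m : ℕ) : (mu z)[2 * m]? = z[m]? := by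
  induction z generalizing m with
  | nil => simp [mu]
  | cons a z ih => cases m <;> simp [mu_cons_s6, Nat.mul_succ, ih]

theorem mu_getElem?_two_mul_add_one (z : List Bool) (m : ℕ) :
    (mu z)[2 * m + 1]? = z[m]?.map (!·) := by
  induction z generalizing m with
  | nil => simp [mu]
  | cons a z ih => cases m <;> simp [mu_cons_s6, Nat.mul_succ, ih]

theorem not_replicate_three_infix_mu (b : Bool) (z : List Bool) : ¬ replicate 3 b <:+: mu z := by
  rw [infix_iff_getElem?]
  rintro ⟨k, -, hk⟩
  have h : ∀ i < 3, (mu z)[k + i]? = some b := fun i hi => by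
    have := hk i (by rwa [length_replicate])
    rwa [getElem_replicate, Nat.add_comm] at this
  obtain ⟨m, rfl | rfl⟩ := Nat.even_or_odd' k
  · have h0 := h 0 (by omega)
    have h1 := h 1 (by omega)
    rw [Nat.add_zero, mu_getElem?_two_mul] at h0
    rw [mu_getElem?_two_mul_add_one, h0] at h1
    simp at h1
  · have h1 := h 1 (by omega)
    have h2 := h 2 (by omega)
    rw [show 2 * m + 1 + 1 = 2 * (m + 1) by ring, mu_getElem?_two_mul] at h1
    rw [show 2 * m + 1 + 2 = 2 * (m + 1) + 1 by ring, mu_getElem?_two_mul_add_one, h1] at h2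
    simp at h2

theorem InL.not_replicate_three_infix {w : List Bool} (hw : InL w) (b : Bool) :
    ¬ replicate 3 b <:+: w := fun h =>
  hw.elim fun z hz => not_replicate_three_infix_mu b z (h.trans hz)

theorem HasPeriod.le_of_replicate_append {b c : Bool} {k p : ℕ} {w : List Bool}
    (hper : HasPeriod (replicate k b ++ c :: w) p) (hp : 0 < p) (hc : c ≠ b) : k ≤ p := by
  by_contra! hpk
  have h := hper (k - p) (by simp only [length_append, length_replicate, length_cons]; omega)
  rw [Nat.sub_add_cancel hpk.le, getElem?_append_left (by rw [length_replicate]; omega),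
    getElem?_append_right (by simp)] at h
  simp [getElem?_replicate, hc.symm] at h

theorem HasPeriod.replicate_infix_of_replicate_append {b : Bool} {k p : ℕ} {w : List Bool}
    (hper : HasPeriod (replicate k b ++ w) p) (hkp : k ≤ p) (hpw : p ≤ w.length) :
    replicate k b <:+: w := by
  refine infix_iff_getElem?.mpr ⟨p - k, by rw [length_replicate]; omega, fun i hi => ?_⟩
  rw [length_replicate] at hi
  have h := hper i (by rw [length_append, length_replicate]; omega)
  rw [getElem?_append_left (by rwa [length_replicate]),
    getElem?_append_right (by rw [length_replicate]; omega)] at h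
  simp only [getElem?_replicate, hi, if_true, length_replicate] at h
  simpa [show i + p - k = i + (p - k) by omega] using h.symm

theorem infix_of_append_append_eq_append {α : Type*} {x u y s t : List α}
    (h : x ++ u ++ y = s ++ t) (hs : s.length ≤ x.length) : u <:+: t := by
  refine ⟨x.drop s.length, y, ?_⟩
  rw [← drop_left' (l₂ := t) rfl, ← h, append_assoc, append_assoc,
    drop_append_of_le_length hs]

theorem exists_eq_drop_append_of_append_eq_append_append {α : Type*} {s v x u y : List α}
    (h : s ++ v = x ++ u ++ y) (hx : x.length ≤ s.length)
    (hu : s.length ≤ x.length + u.length) :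
    ∃ w, u = s.drop x.length ++ w ∧ w <+: v := by
  obtain ⟨t, rfl⟩ : x <+: s :=
    prefix_of_prefix_length_le (by rw [h, append_assoc]; exact prefix_append _ _)
      (prefix_append _ _) hx
  rw [drop_left]
  rw [append_assoc, append_assoc, append_cancel_left_eq] at h
  rcases append_eq_append_iff.mp h with ⟨w, rfl, rfl⟩ | ⟨c, rfl, rfl⟩
  · exact ⟨w, rfl, prefix_append _ _⟩
  · obtain rfl : c = [] := by
      simp only [length_append] at hu
      exact length_eq_zero_iff.mp (by omega)
    exact ⟨[], by simp, nil_prefix⟩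

theorem lemma4 (α : ℝ) (hα : 2 < α) (r : ℕ) (hr : r = ⌈α⌉₊)
    (v : List Bool) (hL : InL ([false, false] ++ v))
    (hfree : PowerFree α ([false, false] ++ v))
    (x u y : List Bool) (p : ℕ) (hp : 0 < p)
    (hsplit : List.replicate r false ++ v = x ++ u ++ y)
    (hper : HasPeriod u p) (hexp : α ≤ (u.length : ℝ) / p) :
    x = [] ∧ u = List.replicate r false := by
  have h2p : 2 * p < u.length := by
    have hpR : (0 : ℝ) < p := by exact_mod_cast hp
    have : (2 * p : ℝ) < u.length := by nlinarith [(le_div_iff₀ hpR).mp hexp]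
    exact_mod_cast this
  have hru : r ≤ u.length :=
    hr ▸ Nat.ceil_le.mpr (hexp.trans (div_le_self (by positivity) (by exact_mod_cast hp)))
  have hr3 : 2 < r := hr ▸ Nat.lt_ceil.mpr (by exact_mod_cast hα)
  have hno000 := hL.not_replicate_three_infix false
  by_cases hx : r ≤ x.length + 2
  · have hu : u <:+: [false, false] ++ v := by
      have hzeros : replicate r false = replicate (r - 2) false ++ [false, false] := by
        rw [show [false, false] = replicate 2 false from rfl, replicate_append_replicate,
          Nat.sub_add_cancel (by omega)]
      rw [hzeros, append_assoc] at hsplit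
      exact infix_of_append_append_eq_append hsplit.symm (by rw [length_replicate]; omega)
    exact absurd (hfree u p hu hp hper) (not_lt.mpr hexp)
  obtain ⟨w, rfl, hwv⟩ := exists_eq_drop_append_of_append_eq_append_append hsplit
    (by rw [length_replicate]; omega) (by rw [length_replicate]; omega)
  rw [drop_replicate] at hper h2p hru ⊢
  rcases w with _ | ⟨c, w⟩
  · simp only [append_nil, length_replicate] at hru
    obtain rfl : x = [] := length_eq_zero_iff.mp (by omega)
    simp
  · exfalso
    have hc : c ≠ false := by
      rintro rfl
      obtain ⟨t, rfl⟩ := hwv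
      exact hno000 ⟨[], w ++ t, rfl⟩
    have hk := hper.le_of_replicate_append hp hc
    have hrep := hper.replicate_infix_of_replicate_append hk
      (by simp only [length_append, length_replicate, length_cons] at h2p ⊢; omega)
    have h000 : replicate 3 false <:+: replicate (r - x.length) false :=
      infix_replicate_iff.mpr ⟨by rw [length_replicate]; omega, rfl⟩
    exact hno000 ((h000.trans hrep).trans (hwv.isInfix.trans (suffix_append _ _).isInfix))
end
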